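/- arXiv:1110.0916 — 2 statements merged into one kernel-verified Lean document; each statement's English description precedes it below -/
import Mathlib

section
/- Let (ẽ, t̃, g̃) be a dual frame satisfying the dual Darboux equations dẽ/ds̄ = t̃, dt̃/ds̄ = γ̄g̃ − ẽ, dg̃/ds̄ = −γ̄t̃, and define ẽ₁ = cos θ̄ ẽ + sin θ̄ t̃ for a differentiable dual function θ̄(s̄). If dẽ₁/ds̄ is proportional to g̃ at every point and sin θ̄ is a unit, then dθ̄/ds̄ = −1. -/
set_option synthInstance.maxHeartbeats 1000000


open DualNumber TrivSqZeroExt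

/-- Formal dual sine: `sin(θ + εθ*) = sin θ + εθ* cos θ`. -/
noncomputable def dsin (θ : ℝ[ε]) : ℝ[ε] :=
  inl (Real.sin θ.fst) + inr (θ.snd * Real.cos θ.fst)

/-- Formal dual cosine: `cos(θ + εθ*) = cos θ − εθ* sin θ`. -/
noncomputable def dcos (θ : ℝ[ε]) : ℝ[ε] :=
  inl (Real.cos θ.fst) - inr (θ.snd * Real.sin θ.fst)

/-- for a dual Darboux frame `(ẽ, t̃, g̃)` (pointwise linearly independent
over `ℝ[ε]`, derivatives `dẽ/ds̄ = t̃`, `dt̃/ds̄ = γ̄g̃ − ẽ`) and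
`ẽ₁ = cos θ̄ ẽ + sin θ̄ t̃`, if `dẽ₁/ds̄` (computed by the Leibniz/chain rule, with
`θ̄' = dθ̄/ds̄`) is proportional to `g̃` and `sin θ̄` is a unit, then `dθ̄/ds̄ = −1`. -/
theorem mannheim_offset_angle (e t g e' t' e1' : Fin 3 → ℝ[ε]) (γ θ θ' : ℝ[ε])
    (hli : LinearIndependent ℝ[ε] ![e, t, g])
    (he' : e' = t) (ht' : t' = γ • g - e)
    (hleib : e1' = (-(dsin θ) * θ') • e + ((dcos θ) * θ') • t
      + (dcos θ) • e' + (dsin θ) • t')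
    (hprop : ∃ μ : ℝ[ε], e1' = μ • g)
    (hsin : IsUnit (dsin θ)) :
    θ' = -1 := by
  obtain ⟨μ, hμ⟩ := hprop
  subst he' ht' hleib
  rw [Fintype.linearIndependent_iff] at hli
  have key := hli ![-(dsin θ) * θ' - dsin θ, (dcos θ) * θ' + dcos θ, (dsin θ) * γ - μ] ?_
  · have h0 := key 0
    simp only [Matrix.cons_val_zero] at h0
    have h1 : dsin θ * (θ' + 1) = 0 := by linear_combination -h0
    have h2 := hsin.mul_left_cancel (b := θ' + 1) (c := 0) (by simpa using h1)
    linear_combination h2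
  · rw [Fin.sum_univ_three]
    simp only [Matrix.cons_val_zero, Matrix.cons_val_one, Matrix.head_cons,
      Matrix.cons_val_two, Matrix.tail_cons]
    funext i
    have h := congrFun hμ i
    simp only [Pi.add_apply, Pi.smul_apply, Pi.sub_apply, Pi.zero_apply, smul_eq_mul] at h ⊢
    linear_combination h
end

section
/- Under the Mannheim offset condition (g̃ = t̃₁ and dθ̄/ds̄ = −1), the dual arc-length parameters satisfy ds̄₁/ds̄ = γ̄ sin θ̄. -/
open DualNumber TrivSqZeroExt

/-- under the Mannheim offset condition (`t̃₁ = g̃` and `dθ̄/ds̄ = −1`),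
with `ẽ₁ = cos θ̄ ẽ + sin θ̄ t̃` and `dẽ₁/ds̄₁ = t̃₁`, the dual arc-length parameters
satisfy `ds̄₁/ds̄ = γ̄ sin θ̄`.  Here `σ = ds̄₁/ds̄`, `e1'` denotes `dẽ₁/ds̄` computed by
the Leibniz/chain rule, and `dẽ₁/ds̄ = (ds̄₁/ds̄) · dẽ₁/ds̄₁`. -/
theorem mannheim_arclength (e t g e' t' t₁ e1' : Fin 3 → ℝ[ε]) (γ θ θ' σ : ℝ[ε])
    (hli : LinearIndependent ℝ[ε] ![e, t, g])
    (he' : e' = t) (ht' : t' = γ • g - e)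
    (ht₁ : t₁ = g) (hθ' : θ' = -1)
    (hleib : e1' = (-(dsin θ) * θ') • e + ((dcos θ) * θ') • t
      + (dcos θ) • e' + (dsin θ) • t')
    (hchain : e1' = σ • t₁) :
    σ = γ * dsin θ := by
  rw [he', ht', hθ'] at hleib
  rw [ht₁] at hchain
  have h := hleib.symm.trans hchain
  have key : (σ - γ * dsin θ) • g = 0 := by
    have : (σ - γ * dsin θ) • g =
        σ • g - ((-(dsin θ) * (-1)) • e + ((dcos θ) * (-1)) • t
          + (dcos θ) • t + (dsin θ) • (γ • g - e)) := by
      module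
    rw [this, ← h, sub_self]
  have h3 := Fintype.linearIndependent_iff.mp hli ![0, 0, σ - γ * dsin θ]
  have hz : ∑ i, (![0, 0, σ - γ * dsin θ] : Fin 3 → ℝ[ε]) i • ![e, t, g] i = 0 := by
    simp [Fin.sum_univ_three, key]
  have h4 := h3 hz 2
  simp at h4
  exact sub_eq_zero.mp h4
end
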